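/- arXiv:1211.1699 — 6 statements merged into one kernel-verified Lean document; each statement's English description precedes it below -/
import Mathlib

section
/- (Generalized AHK regret guarantee.) Fix r ≥ 2, K ∈ ℕ, ρ > 0, ε ∈ (0, ρ], and set η = ε/(2ρ). Let M_{i,t} ∈ ℝ for i ∈ {1,…,r}, t ∈ {1,…,K} satisfy |M_{i,t}| ≤ ρ for all i,t, and define weights y_{i,t} by the multiplicative update rule: y_{i,1} = 1, and y_{i,t+1} = y_{i,t}·(1−η)^{M_{i,t}/ρ} if M_{i,t} ≥ 0, y_{i,t+1} = y_{i,t}·(1+η)^{−M_{i,t}/ρ} if M_{i,t} < 0. Suppose that in every round t, ∑_{j=1}^r y_{j,t} M_{j,t} ≥ 0. If K ≥ 4ρ² ln r / ε², then for every i ∈ {1,…,r}, (1/K)·∑_{t=1}^K M_{i,t} ≥ −ε. -/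
/-!
The potential `Φ t = ∑ j, y j t` never increases: by concavity of `p ↦ a ^ p` the update factor
for the normalized gain `x = M / ρ ∈ [-1, 1]` is at most `1 - η x`, so
`Φ (t + 1) ≤ Φ t - η ∑ j, y j t * x j t ≤ Φ t` by the oracle condition; hence `y i K ≤ Φ K ≤ r`.
Conversely `log (1 - η) ≥ -η - η²` and `log (1 + η) ≥ η - η²` for `η ≤ 1/2` make every factor at
least `exp (-η x - η²)`, so `y i K ≥ exp (-η ∑ₜ x i t - η² K)`. Taking logarithms,
`-η ∑ₜ x i t - η² K ≤ log r`, and `η = ε / (2ρ)`, `K ≥ 4ρ² log r / ε²` turn this into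
`∑ₜ M i t ≥ -ε K`.
-/

open Finset Real

/-- Compare the tail of `-log (1 - η) = ∑ η ^ (n + 1) / (n + 1)` with `η² / 2 * ∑ ηⁿ`. -/
lemma neg_sub_sq_le_log_one_sub {η : ℝ} (h0 : 0 ≤ η) (h1 : η ≤ 1 / 2) :
    -η - η ^ 2 ≤ log (1 - η) := by
  have hseries := hasSum_pow_div_log_of_abs_lt_one (x := η) (by rw [abs_of_nonneg h0]; linarith)
  have htail := (hasSum_nat_add_iff' 1).mpr hseries
  have hgeom := (hasSum_geometric_of_lt_one h0 (by linarith)).mul_left (η ^ 2 / 2)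
  have hle := hasSum_le (fun n => ?_) htail hgeom
  · have hgeom_le : η ^ 2 / 2 * (1 - η)⁻¹ ≤ η ^ 2 := by
      rw [← div_eq_mul_inv, div_div, div_le_iff₀ (by linarith)]
      nlinarith
    norm_num at hle
    linarith
  · have hn : (2 : ℝ) ≤ n + 1 + 1 := by linarith [n.cast_nonneg (α := ℝ)]
    push_cast
    rw [div_le_iff₀ (by positivity)]
    calc η ^ (n + 1 + 1) = η ^ 2 / 2 * η ^ n * 2 := by ring
      _ ≤ η ^ 2 / 2 * η ^ n * (n + 1 + 1) := by gcongr

lemma sub_sq_le_log_one_add {η : ℝ} (h0 : 0 ≤ η) : η - η ^ 2 ≤ log (1 + η) := by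
  refine le_trans ?_ (one_sub_inv_le_log_of_pos (by linarith))
  have : (1 + η)⁻¹ ≤ 1 - η + η ^ 2 := by
    rw [inv_le_iff_one_le_mul₀ (by positivity)]
    nlinarith [pow_nonneg h0 3]
  linarith

/-- The paper's update factor `y_{i,t+1} / y_{i,t}` in terms of the normalized gain
`x = M_{i,t} / ρ`. -/
noncomputable def mwFactor (η x : ℝ) : ℝ :=
  if 0 ≤ x then (1 - η) ^ x else (1 + η) ^ (-x)

section mwFactor

variable {η x : ℝ}

lemma mwFactor_pos (h0 : 0 ≤ η) (h1 : η < 1) : 0 < mwFactor η x := by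
  unfold mwFactor
  split_ifs <;> exact rpow_pos_of_pos (by linarith) _

lemma mwFactor_le_one_sub_mul (h0 : 0 ≤ η) (h1 : η ≤ 1) (hx : |x| ≤ 1) :
    mwFactor η x ≤ 1 - η * x := by
  obtain ⟨hx₁, hx₂⟩ := abs_le.mp hx
  unfold mwFactor
  split_ifs with hx₀
  · have := rpow_one_add_le_one_add_mul_self (s := -η) (by linarith) hx₀ hx₂
    rw [← sub_eq_add_neg] at this
    linarith
  · have := rpow_one_add_le_one_add_mul_self (s := η) (by linarith) (p := -x) (by linarith)
      (by linarith)
    linarith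

lemma exp_le_mwFactor (h0 : 0 ≤ η) (h1 : η ≤ 1 / 2) (hx : |x| ≤ 1) :
    exp (-η * x - η ^ 2) ≤ mwFactor η x := by
  obtain ⟨hx₁, hx₂⟩ := abs_le.mp hx
  unfold mwFactor
  split_ifs with hx₀
  · rw [rpow_def_of_pos (by linarith), exp_le_exp]
    have := mul_le_mul_of_nonneg_right (neg_sub_sq_le_log_one_sub h0 h1) hx₀
    nlinarith [sq_nonneg η]
  · rw [rpow_def_of_pos (by linarith), exp_le_exp]
    have := mul_le_mul_of_nonneg_right (sub_sq_le_log_one_add h0) (by linarith : 0 ≤ -x)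
    nlinarith [sq_nonneg η]

end mwFactor

structure IsMWRun {ι : Type*} (η : ℝ) (K : ℕ) (x w : ι → ℕ → ℝ) : Prop where
  init : ∀ i, w i 0 = 1
  step : ∀ i t, t < K → w i (t + 1) = w i t * mwFactor η (x i t)

namespace IsMWRun

variable {ι : Type*} {η : ℝ} {K : ℕ} {x w : ι → ℕ → ℝ}

lemma pos (h : IsMWRun η K x w) (h0 : 0 ≤ η) (h1 : η < 1) :
    ∀ t ≤ K, ∀ i, 0 < w i t := by
  intro t
  induction t with
  | zero => intro _ i; simp [h.init]
  | succ t ih =>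
    intro ht i
    rw [h.step i t ht]
    exact mul_pos (ih (by omega) i) (mwFactor_pos h0 h1)

lemma sum_le_card [Fintype ι] (h : IsMWRun η K x w) (h0 : 0 ≤ η) (h1 : η < 1)
    (hx : ∀ i t, t < K → |x i t| ≤ 1) (hgain : ∀ t < K, 0 ≤ ∑ j, w j t * x j t) :
    ∀ t ≤ K, ∑ j, w j t ≤ Fintype.card ι := by
  intro t
  induction t with
  | zero => intro _; simp [h.init]
  | succ t ih =>
    intro ht
    calc ∑ j, w j (t + 1) ≤ ∑ j, w j t * (1 - η * x j t) := by
          refine sum_le_sum fun j _ => ?_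
          rw [h.step j t ht]
          exact mul_le_mul_of_nonneg_left (mwFactor_le_one_sub_mul h0 h1.le (hx j t ht))
            (h.pos h0 h1 t (by omega) j).le
      _ = ∑ j, w j t - η * ∑ j, w j t * x j t := by
          rw [mul_sum, ← sum_sub_distrib]
          exact sum_congr rfl fun j _ => by ring
      _ ≤ ∑ j, w j t := sub_le_self _ (mul_nonneg h0 (hgain t ht))
      _ ≤ Fintype.card ι := ih (by omega)

lemma exp_sum_le (h : IsMWRun η K x w) (h0 : 0 ≤ η) (h1 : η ≤ 1 / 2)
    (hx : ∀ i t, t < K → |x i t| ≤ 1) (i : ι) :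
    ∀ t ≤ K, exp (∑ s ∈ range t, (-η * x i s - η ^ 2)) ≤ w i t := by
  intro t
  induction t with
  | zero => intro _; simp [h.init]
  | succ t ih =>
    intro ht
    rw [sum_range_succ, exp_add, h.step i t ht]
    exact mul_le_mul (ih (by omega)) (exp_le_mwFactor h0 h1 (hx i t ht)) (exp_pos _).le
      (h.pos h0 (by linarith) t (by omega) i).le

theorem regret_le_log_card [Fintype ι] (h : IsMWRun η K x w) (h0 : 0 ≤ η) (h1 : η ≤ 1 / 2)
    (hx : ∀ i t, t < K → |x i t| ≤ 1) (hgain : ∀ t < K, 0 ≤ ∑ j, w j t * x j t) (i : ι) :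
    -η * ∑ t ∈ range K, x i t - η ^ 2 * K ≤ log (Fintype.card ι) := by
  have hcard : (0 : ℝ) < Fintype.card ι := by
    exact_mod_cast Fintype.card_pos_iff.mpr ⟨i⟩
  have hsum : ∑ t ∈ range K, (-η * x i t - η ^ 2) = -η * ∑ t ∈ range K, x i t - η ^ 2 * K := by
    rw [sum_sub_distrib, ← mul_sum, sum_const, card_range, nsmul_eq_mul]
    ring
  rw [← hsum, le_log_iff_exp_le hcard]
  calc exp _ ≤ w i K := h.exp_sum_le h0 h1 hx i K le_rfl
    _ ≤ ∑ j, w j K := single_le_sum (fun j _ => (h.pos h0 (by linarith) K le_rfl j).le) (mem_univ i)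
    _ ≤ Fintype.card ι := h.sum_le_card h0 (by linarith) hx hgain K le_rfl

end IsMWRun

theorem generalized_ahk_guarantee_general
    (r K : ℕ) (ρ ε : ℝ) (hρ : 0 < ρ) (hε : 0 < ε) (hερ : ε ≤ ρ)
    (η : ℝ) (hη : η = ε / (2 * ρ))
    (M : Fin r → ℕ → ℝ) (hM : ∀ i t, t < K → |M i t| ≤ ρ)
    (y : Fin r → ℕ → ℝ)
    (hy0 : ∀ i, y i 0 = 1)
    (hypos : ∀ i t, t < K → 0 ≤ M i t → y i (t + 1) = y i t * (1 - η) ^ (M i t / ρ))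
    (hyneg : ∀ i t, t < K → M i t < 0 → y i (t + 1) = y i t * (1 + η) ^ (-(M i t) / ρ))
    (horacle : ∀ t, t < K → 0 ≤ ∑ j, y j t * M j t)
    (hK : 4 * ρ ^ 2 * Real.log r / ε ^ 2 ≤ (K : ℝ)) :
    ∀ i, -ε ≤ (1 / (K : ℝ)) * ∑ t ∈ Finset.range K, M i t := by
  intro i
  have hη0 : 0 ≤ η := by rw [hη]; positivity
  have hη1 : η ≤ 1 / 2 := by
    rw [hη, div_le_div_iff₀ (by positivity) two_pos]; linarith
  have hrun : IsMWRun η K (fun j t => M j t / ρ) y := by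
    refine ⟨hy0, fun j t ht => ?_⟩
    rcases le_or_gt 0 (M j t) with hMjt | hMjt
    · rw [hypos j t ht hMjt, mwFactor, if_pos (div_nonneg hMjt hρ.le)]
    · rw [hyneg j t ht hMjt, mwFactor, if_neg (not_le.mpr (div_neg_of_neg_of_pos hMjt hρ)),
        neg_div]
  have hx : ∀ j t, t < K → |M j t / ρ| ≤ 1 := fun j t ht => by
    rw [abs_div, abs_of_pos hρ, div_le_one hρ]; exact hM j t ht
  have hgain : ∀ t < K, 0 ≤ ∑ j, y j t * (M j t / ρ) := fun t ht => by
    simp_rw [← mul_div_assoc, ← Finset.sum_div]; exact div_nonneg (horacle t ht) hρ.le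
  have hregret := hrun.regret_le_log_card hη0 hη1 hx hgain i
  rw [Fintype.card_fin, ← Finset.sum_div] at hregret
  set S := ∑ t ∈ Finset.range K, M i t
  have hlog : 4 * ρ ^ 2 * Real.log r ≤ K * ε ^ 2 := (div_le_iff₀ (by positivity)).mp hK
  have hscaled : -(2 * ε) * S - ε ^ 2 * K ≤ 4 * ρ ^ 2 * Real.log r := by
    calc -(2 * ε) * S - ε ^ 2 * K = 4 * ρ ^ 2 * (-η * (S / ρ) - η ^ 2 * K) := by
          rw [hη]; field_simp; ring
      _ ≤ 4 * ρ ^ 2 * Real.log r := by gcongr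
  have hS : -(ε * K) ≤ S := le_of_mul_le_mul_left (by linarith) hε
  rcases K.eq_zero_or_pos with rfl | hKpos
  · simp [S, hε.le]
  · rw [one_div, inv_mul_eq_div, le_div_iff₀ (by exact_mod_cast hKpos)]
    linarith

/-- Generalized AHK regret guarantee: with width `ρ`, learning rate
`η = ε/(2ρ)`, multiplicative weight updates, and nonnegative oracle value in
every round, after `K ≥ 4ρ² ln r / ε²` rounds the average violation of each
constraint is at least `-ε`. -/
theorem generalized_ahk_guarantee
    (r K : ℕ) (hr : 2 ≤ r) (ρ ε : ℝ) (hρ : 0 < ρ) (hε : 0 < ε) (hερ : ε ≤ ρ)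
    (η : ℝ) (hη : η = ε / (2 * ρ))
    (M : Fin r → ℕ → ℝ) (hM : ∀ i t, t < K → |M i t| ≤ ρ)
    (y : Fin r → ℕ → ℝ)
    (hy0 : ∀ i, y i 0 = 1)
    (hypos : ∀ i t, t < K → 0 ≤ M i t → y i (t + 1) = y i t * (1 - η) ^ (M i t / ρ))
    (hyneg : ∀ i t, t < K → M i t < 0 → y i (t + 1) = y i t * (1 + η) ^ (-(M i t) / ρ))
    (horacle : ∀ t, t < K → 0 ≤ ∑ j, y j t * M j t)
    (hK : 4 * ρ ^ 2 * Real.log r / ε ^ 2 ≤ (K : ℝ)) :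
    ∀ i, -ε ≤ (1 / (K : ℝ)) * ∑ t ∈ Finset.range K, M i t :=
  generalized_ahk_guarantee_general r K ρ ε hρ hε hερ η hη M hM y hy0 hypos hyneg horacle hK
end

section
/- (Multiplicative-weights regret bound underlying the Generalized AHK theorem.) Fix r ≥ 2, K ∈ ℕ, ρ > 0, and η ∈ (0, 1/2]. Let M_{i,t} ∈ ℝ for i ∈ {1,…,r}, t ∈ {1,…,K} satisfy |M_{i,t}| ≤ ρ for all i,t, and define weights y_{i,t} by the multiplicative update rule: y_{i,1} = 1, and y_{i,t+1} = y_{i,t}·(1−η)^{M_{i,t}/ρ} if M_{i,t} ≥ 0, y_{i,t+1} = y_{i,t}·(1+η)^{−M_{i,t}/ρ} if M_{i,t} < 0. Then for every i ∈ {1,…,r}: ∑_{t=1}^K ( ∑_{j=1}^r y_{j,t} M_{j,t} ) / ( ∑_{j=1}^r y_{j,t} ) ≤ ∑_{t=1}^K M_{i,t} + η·∑_{t=1}^K |M_{i,t}| + (ρ·ln r)/η. -/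
/-!
Track the potential `Φ t = ∑ j, y j t`. By Bernoulli's inequality every update factor is at most
`1 - η M/ρ`, so `Φ (t+1) ≤ Φ t (1 - (η/ρ) G t) ≤ Φ t exp (-(η/ρ) G t)`, where `G t` is the
normalized weighted gain of round `t`; hence `Φ K ≤ r exp (-(η/ρ) ∑ G)`. Conversely
`log (1 - η) ≥ -η - η²` and `log (1 + η) ≥ η - η²` bound every single factor of expert `i` from
below by `exp (-(η/ρ) M - (η²/ρ) |M|)`. Comparing logarithms in `y i K ≤ Φ K` and multiplying by
`ρ/η` gives the bound.
-/

open Finset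

namespace Real

lemma neg_sub_sq_le_log_one_sub {x : ℝ} (hx0 : 0 ≤ x) (hx : x ≤ 1 / 2) :
    -x - x ^ 2 ≤ log (1 - x) := by
  have hpos : 0 < 1 - x := by linarith
  -- `log y ≤ sinh (log y)` for `y = (1 - x)⁻¹ ≥ 1`
  have hsinh : log (1 - x)⁻¹ ≤ ((1 - x)⁻¹ - (1 - x)) / 2 := by
    have h := sinh_log (inv_pos.2 hpos)
    rw [inv_inv] at h
    rw [← h, self_le_sinh_iff]
    exact log_nonneg (one_le_inv₀ hpos |>.2 (by linarith))
  have hinv : (1 - x)⁻¹ ≤ 1 + x + 2 * x ^ 2 := by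
    rw [inv_le_iff_one_le_mul₀ hpos]
    nlinarith
  rw [log_inv] at hsinh
  linarith

lemma sub_sq_le_log_one_add {x : ℝ} (hx : 0 ≤ x) : x - x ^ 2 ≤ log (1 + x) := by
  refine le_trans ?_ (le_log_one_add_of_nonneg hx)
  rw [le_div_iff₀ (by linarith)]
  nlinarith

end Real

lemma eq_mul_prod_range_of_succ_eq {M : Type*} [CommMonoid M] {f g : ℕ → M} {n : ℕ}
    (h : ∀ t < n, f (t + 1) = f t * g t) : f n = f 0 * ∏ t ∈ range n, g t := by
  induction n with
  | zero => simp
  | succ n ih =>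
    rw [h n n.lt_succ_self, ih fun t ht => h t (by omega), prod_range_succ, mul_assoc]

lemma le_mul_exp_sum_of_succ_le {f a : ℕ → ℝ} {n : ℕ}
    (h : ∀ t < n, f (t + 1) ≤ f t * Real.exp (a t)) :
    f n ≤ f 0 * Real.exp (∑ t ∈ range n, a t) := by
  induction n with
  | zero => simp
  | succ n ih =>
    rw [sum_range_succ, Real.exp_add, ← mul_assoc]
    exact (h n n.lt_succ_self).trans
      (mul_le_mul_of_nonneg_right (ih fun t ht => h t (by omega)) (Real.exp_pos _).le)

lemma sum_mul_le_sum_mul_exp {ι : Type*} (s : Finset ι) {w f m : ι → ℝ} (c : ℝ)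
    (hw : ∀ j ∈ s, 0 ≤ w j) (hW : 0 < ∑ j ∈ s, w j) (hf : ∀ j ∈ s, f j ≤ 1 - c * m j) :
    ∑ j ∈ s, w j * f j ≤
      (∑ j ∈ s, w j) * Real.exp (-c * ((∑ j ∈ s, w j * m j) / ∑ j ∈ s, w j)) := by
  calc ∑ j ∈ s, w j * f j ≤ ∑ j ∈ s, w j * (1 - c * m j) :=
        sum_le_sum fun j hj => mul_le_mul_of_nonneg_left (hf j hj) (hw j hj)
    _ = (∑ j ∈ s, w j) * (-c * ((∑ j ∈ s, w j * m j) / ∑ j ∈ s, w j) + 1) := by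
        simp only [mul_sub, mul_one, sum_sub_distrib, mul_left_comm _ c, ← mul_sum]
        field_simp
        ring
    _ ≤ _ := mul_le_mul_of_nonneg_left (Real.add_one_le_exp _) hW.le

noncomputable def mwUpdateFactor (η ρ m : ℝ) : ℝ :=
  if 0 ≤ m then (1 - η) ^ (m / ρ) else (1 + η) ^ (-m / ρ)

lemma mwUpdateFactor_le {η ρ m : ℝ} (hη0 : 0 ≤ η) (hη1 : η ≤ 1) (hρ : 0 < ρ) (hm : |m| ≤ ρ) :
    mwUpdateFactor η ρ m ≤ 1 - η * (m / ρ) := by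
  unfold mwUpdateFactor
  split_ifs with h
  · calc (1 - η) ^ (m / ρ) = (1 + -η) ^ (m / ρ) := by rw [sub_eq_add_neg]
      _ ≤ 1 + m / ρ * -η := rpow_one_add_le_one_add_mul_self (by linarith)
          (div_nonneg h hρ.le) ((div_le_one hρ).2 ((le_abs_self m).trans hm))
      _ = _ := by ring
  · calc (1 + η) ^ (-m / ρ) ≤ 1 + -m / ρ * η := rpow_one_add_le_one_add_mul_self (by linarith)
          (div_nonneg (by linarith) hρ.le) ((div_le_one hρ).2 ((neg_le_abs m).trans hm))
      _ = _ := by ring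

lemma exp_le_mwUpdateFactor {η ρ m : ℝ} (hη0 : 0 ≤ η) (hη : η ≤ 1 / 2) (hρ : 0 ≤ ρ) :
    Real.exp (-(η / ρ) * m - η ^ 2 / ρ * |m|) ≤ mwUpdateFactor η ρ m := by
  unfold mwUpdateFactor
  split_ifs with h
  · rw [Real.rpow_def_of_pos (by linarith), abs_of_nonneg h, Real.exp_le_exp]
    calc -(η / ρ) * m - η ^ 2 / ρ * m = (-η - η ^ 2) * (m / ρ) := by ring
      _ ≤ _ := mul_le_mul_of_nonneg_right (Real.neg_sub_sq_le_log_one_sub hη0 hη)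
          (div_nonneg h hρ)
  · rw [Real.rpow_def_of_pos (by linarith), abs_of_neg (not_le.1 h), Real.exp_le_exp]
    calc -(η / ρ) * m - η ^ 2 / ρ * -m = (η - η ^ 2) * (-m / ρ) := by ring
      _ ≤ _ := mul_le_mul_of_nonneg_right (Real.sub_sq_le_log_one_add hη0)
          (div_nonneg (by linarith [not_le.1 h]) hρ)

theorem mw_regret_bound_general
    (r K : ℕ) (ρ : ℝ) (hρ : 0 < ρ)
    (η : ℝ) (hη : 0 < η) (hη2 : η ≤ 1 / 2)
    (M : Fin r → ℕ → ℝ) (hM : ∀ i t, t < K → |M i t| ≤ ρ)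
    (y : Fin r → ℕ → ℝ)
    (hy0 : ∀ i, y i 0 = 1)
    (hypos : ∀ i t, t < K → 0 ≤ M i t → y i (t + 1) = y i t * (1 - η) ^ (M i t / ρ))
    (hyneg : ∀ i t, t < K → M i t < 0 → y i (t + 1) = y i t * (1 + η) ^ (-(M i t) / ρ)) :
    ∀ i, ∑ t ∈ Finset.range K, (∑ j, y j t * M j t) / (∑ j, y j t) ≤
      (∑ t ∈ Finset.range K, M i t) + η * (∑ t ∈ Finset.range K, |M i t|) +
        ρ * Real.log r / η := by
  intro i
  have hstep (j : Fin r) (t : ℕ) (ht : t < K) :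
      y j (t + 1) = y j t * mwUpdateFactor η ρ (M j t) := by
    unfold mwUpdateFactor
    split_ifs with h
    exacts [hypos j t ht h, hyneg j t ht (not_le.1 h)]
  have hweight (j : Fin r) (n : ℕ) (hn : n ≤ K) :
      Real.exp (∑ t ∈ range n, (-(η / ρ) * M j t - η ^ 2 / ρ * |M j t|)) ≤ y j n := by
    rw [eq_mul_prod_range_of_succ_eq fun t ht => hstep j t (by omega), hy0, one_mul,
      Real.exp_sum]
    exact prod_le_prod (fun t _ => (Real.exp_pos _).le)
      fun t _ => exp_le_mwUpdateFactor hη.le hη2 hρ.le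
  have hpos (j : Fin r) (n : ℕ) (hn : n ≤ K) : 0 < y j n :=
    (Real.exp_pos _).trans_le (hweight j n hn)
  have hpotential (t : ℕ) (ht : t < K) : ∑ j, y j (t + 1) ≤
      (∑ j, y j t) * Real.exp (-(η / ρ) * ((∑ j, y j t * M j t) / ∑ j, y j t)) := by
    simp only [hstep _ t ht]
    exact sum_mul_le_sum_mul_exp _ _ (fun j _ => (hpos j t ht.le).le)
      (sum_pos (fun j _ => hpos j t ht.le) ⟨i, mem_univ i⟩)
      fun j _ => (mwUpdateFactor_le hη.le (by linarith) hρ (hM j t ht)).trans_eq (by ring)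
  have htotal := le_mul_exp_sum_of_succ_le (f := fun n => ∑ j, y j n) hpotential
  simp only [hy0, sum_const, card_univ, Fintype.card_fin, nsmul_eq_mul, mul_one] at htotal
  have key := (hweight i K le_rfl).trans
    ((single_le_sum (fun j _ => (hpos j K le_rfl).le) (mem_univ i)).trans htotal)
  rw [← Real.exp_log (Nat.cast_pos.2 i.pos), ← Real.exp_add, Real.exp_le_exp] at key
  simp only [sum_sub_distrib, ← mul_sum] at key
  field_simp at key ⊢
  linarith

/-- Multiplicative-weights per-expert regret bound: for gains `M i t` of
magnitude at most `ρ` and multiplicative update with rate `η ∈ (0, 1/2]`, the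
total normalized weighted gain is at most the gain of any single expert `i`
plus `η ∑ |M i t| + ρ ln r / η`. -/
theorem mw_regret_bound
    (r K : ℕ) (hr : 2 ≤ r) (ρ : ℝ) (hρ : 0 < ρ)
    (η : ℝ) (hη : 0 < η) (hη2 : η ≤ 1 / 2)
    (M : Fin r → ℕ → ℝ) (hM : ∀ i t, t < K → |M i t| ≤ ρ)
    (y : Fin r → ℕ → ℝ)
    (hy0 : ∀ i, y i 0 = 1)
    (hypos : ∀ i t, t < K → 0 ≤ M i t → y i (t + 1) = y i t * (1 - η) ^ (M i t / ρ))
    (hyneg : ∀ i t, t < K → M i t < 0 → y i (t + 1) = y i t * (1 + η) ^ (-(M i t) / ρ)) :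
    ∀ i, ∑ t ∈ Finset.range K, (∑ j, y j t * M j t) / (∑ j, y j t) ≤
      (∑ t ∈ Finset.range K, M i t) + η * (∑ t ∈ Finset.range K, |M i t|) +
        ρ * Real.log r / η :=
  mw_regret_bound_general r K ρ hρ η hη hη2 M hM y hy0 hypos hyneg
end

section
/- Let (Ω, D) be a finite probability space, A ⊆ Ω an event with D(A) > 0, g : Ω → [0,1], δ > 0, and k ≥ 1 an integer. Draw ω_1,…,ω_N independently from D and let S = {j ∈ {1,…,N} : ω_j ∈ A}. Then the probability of the event that |S| ≥ k and simultaneously | (1/|S|)·∑_{j∈S} g(ω_j) − E_D[g·1_A]/D(A) | > δ is at most 2·exp(−2·k·δ²). -/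
/-!
Write `S(ω) = {j | ω j ∈ A}`. Conditioned on the fiber `{S = s}`, which is the box
`∏ j, (if j ∈ s then A else Aᶜ)`, the product measure is again a product measure, whose
factors indexed by `s` are `D[|A]`. On each fiber with `|s| ≥ k`, Hoeffding's inequality for
the `|s|` independent `[0,1]`-valued variables `g (ω j)`, `j ∈ s`, bounds the conditional
probability of a deviation `> δ` by `2 exp (-2 |s| δ²) ≤ 2 exp (-2 k δ²)`; summing over the
fibers gives the claim.
-/

open MeasureTheory Finset
open scoped Classical

open ProbabilityTheory

theorem measure_abs_sum_ge_le_of_iIndepFun {Ω ι : Type*} [MeasurableSpace Ω] {μ : Measure Ω}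
    {X : ι → Ω → ℝ} (h_indep : iIndepFun X μ) {c : ι → NNReal} {s : Finset ι}
    (h_subG : ∀ i ∈ s, HasSubgaussianMGF (X i) (c i) μ) {ε : ℝ} (hε : 0 ≤ ε) :
    μ.real {ω | ε ≤ |∑ i ∈ s, X i ω|} ≤ 2 * Real.exp (-ε ^ 2 / (2 * ∑ i ∈ s, c i)) := by
  have h_sum := HasSubgaussianMGF.sum_of_iIndepFun h_indep h_subG
  have : IsFiniteMeasure μ := by
    simpa [integrable_const_iff] using h_sum.integrable_exp_mul 0
  calc μ.real {ω | ε ≤ |∑ i ∈ s, X i ω|}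
      ≤ μ.real ({ω | ε ≤ ∑ i ∈ s, X i ω} ∪ {ω | ε ≤ -∑ i ∈ s, X i ω}) :=
        measureReal_mono fun ω hω => by simpa [le_neg] using (le_abs'.mp hω).symm
    _ ≤ _ := measureReal_union_le _ _
    _ ≤ _ := by
        rw [two_mul]
        exact add_le_add (h_sum.measure_ge_le hε) (h_sum.neg.measure_ge_le hε)

theorem measure_pi_abs_sum_sub_integral_ge_le {ι Ω : Type*} [Fintype ι] [MeasurableSpace Ω]
    {ν : ι → Measure Ω} [∀ i, IsProbabilityMeasure (ν i)] {g : Ω → ℝ} (hg_meas : Measurable g)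
    (hg : ∀ x, g x ∈ Set.Icc (0 : ℝ) 1) (s : Finset ι) {ε : ℝ} (hε : 0 ≤ ε) :
    (Measure.pi ν).real {ω | ε ≤ |∑ i ∈ s, (g (ω i) - ∫ x, g x ∂ν i)|}
      ≤ 2 * Real.exp (-2 * ε ^ 2 / s.card) := by
  set X : ι → Ω → ℝ := fun i x => g x - ∫ x, g x ∂ν i
  have h_indep : iIndepFun (fun i ω => X i (ω i)) (Measure.pi ν) :=
    iIndepFun_pi fun i => (hg_meas.sub_const _).aemeasurable
  have h_subG (i : ι) : HasSubgaussianMGF (fun ω => X i (ω i)) ((‖(1 : ℝ) - 0‖₊ / 2) ^ 2)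
      (Measure.pi ν) := by
    have h : HasSubgaussianMGF (X i) ((‖(1 : ℝ) - 0‖₊ / 2) ^ 2) (ν i) :=
      hasSubgaussianMGF_of_mem_Icc hg_meas.aemeasurable (ae_of_all (ν i) hg)
    rw [← (measurePreserving_eval ν i).map_eq] at h
    exact h.of_map (measurePreserving_eval ν i).measurable.aemeasurable
  convert measure_abs_sum_ge_le_of_iIndepFun h_indep (fun i _ => h_subG i) hε using 3
  simp only [Finset.sum_const, nsmul_eq_mul]
  norm_num
  ring

theorem sum_sub_const_eq_card_mul_div_card_sub {ι : Type*} (s : Finset ι) (x : ι → ℝ) (c : ℝ) :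
    ∑ j ∈ s, (x j - c) = s.card * ((∑ j ∈ s, x j) / s.card - c) := by
  rcases s.eq_empty_or_nonempty with rfl | hs
  · simp
  rw [sum_sub_distrib, sum_const, nsmul_eq_mul]
  field_simp

theorem pi_cond_univ_pi {ι : Type*} [Fintype ι] {α : ι → Type*} [∀ i, MeasurableSpace (α i)]
    (μ : ∀ i, Measure (α i)) [∀ i, IsFiniteMeasure (μ i)] {B : ∀ i, Set (α i)}
    (hB : ∀ i, MeasurableSet (B i)) :
    (Measure.pi μ)[|Set.univ.pi B] = Measure.pi fun i => (μ i)[|B i] := by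
  refine (Measure.pi_eq fun S _ => ?_).symm
  rw [cond_apply (MeasurableSet.univ_pi hB), ← Set.pi_inter_distrib, Measure.pi_pi,
    Measure.pi_pi, ENNReal.prod_inv_distrib fun i _ j _ _ => Or.inr (measure_ne_top _ _),
    ← prod_mul_distrib]
  exact prod_congr rfl fun i _ => (cond_apply (hB i) _ _).symm

theorem integral_cond_eq_integral_indicator_div {Ω : Type*} [MeasurableSpace Ω]
    (μ : Measure Ω) {A : Set Ω} (hA : MeasurableSet A) (g : Ω → ℝ) :
    ∫ x, g x ∂μ[|A] = (∫ x, A.indicator g x ∂μ) / (μ A).toReal := by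
  rw [ProbabilityTheory.cond, integral_smul_measure, integral_indicator hA, ENNReal.toReal_inv,
    smul_eq_mul, div_eq_inv_mul]

section Fibers

variable {ι Ω : Type*} [Fintype ι]

noncomputable def hitIndices (A : Set Ω) (ω : ι → Ω) : Finset ι :=
  univ.filter fun j => ω j ∈ A

theorem preimage_hitIndices_singleton (A : Set Ω) (s : Finset ι) :
    hitIndices A ⁻¹' {s} = Set.univ.pi fun j => if j ∈ s then A else Aᶜ := by
  ext ω
  simp only [hitIndices, Set.mem_preimage, Set.mem_singleton_iff, Finset.ext_iff, mem_filter,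
    mem_univ, true_and, Set.mem_univ_pi]
  refine forall_congr' fun j => ?_
  split_ifs with hj <;> simp [hj]

variable [MeasurableSpace Ω] (D : Measure Ω) [IsProbabilityMeasure D]

theorem measure_preimage_hitIndices_inter_le {A : Set Ω} (hA : MeasurableSet A) {g : Ω → ℝ}
    (hg_meas : Measurable g) (hg : ∀ x, g x ∈ Set.Icc (0 : ℝ) 1) {δ : ℝ} (hδ : 0 ≤ δ)
    (s : Finset ι) :
    Measure.pi (fun _ : ι => D) (hitIndices A ⁻¹' {s} ∩
        {ω | δ < |(∑ j ∈ s, g (ω j)) / s.card - ∫ x, g x ∂D[|A]|})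
      ≤ ENNReal.ofReal (2 * Real.exp (-2 * s.card * δ ^ 2)) *
        Measure.pi (fun _ : ι => D) (hitIndices A ⁻¹' {s}) := by
  set B : ι → Set Ω := fun j => if j ∈ s then A else Aᶜ
  have hB (j : ι) : MeasurableSet (B j) := by
    by_cases hj : j ∈ s <;> simp [B, hj, hA]
  rw [preimage_hitIndices_singleton, ← cond_mul_eq_inter (MeasurableSet.univ_pi hB)]
  gcongr
  by_cases hF : Measure.pi (fun _ : ι => D) (Set.univ.pi B) = 0
  · simp [cond_eq_zero_of_meas_eq_zero hF]
  have hDB : ∀ j, D (B j) ≠ 0 := by simpa [Measure.pi_pi, prod_eq_zero_iff] using hF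
  have : ∀ j, IsProbabilityMeasure D[|B j] := fun j => cond_isProbabilityMeasure (hDB j)
  rw [pi_cond_univ_pi _ hB]
  calc _ ≤ Measure.pi (fun j => D[|B j])
          {ω | s.card * δ ≤ |∑ j ∈ s, (g (ω j) - ∫ x, g x ∂D[|B j])|} := by
        refine measure_mono fun ω (hω : δ < _) => ?_
        rw [Set.mem_ofPred_eq, sum_congr rfl fun j hj => by rw [show B j = A from if_pos hj],
          sum_sub_const_eq_card_mul_div_card_sub, abs_mul, Nat.abs_cast]
        exact mul_le_mul_of_nonneg_left hω.le (Nat.cast_nonneg _)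
    _ ≤ ENNReal.ofReal (2 * Real.exp (-2 * (s.card * δ) ^ 2 / s.card)) := by
        rw [← ofReal_measureReal]
        exact ENNReal.ofReal_le_ofReal
          (measure_pi_abs_sum_sub_integral_ge_le hg_meas hg s (by positivity))
    _ = ENNReal.ofReal (2 * Real.exp (-2 * s.card * δ ^ 2)) := by
        rcases eq_or_ne (s.card : ℝ) 0 with hs | hs
        · simp [hs]
        · field_simp

theorem measure_preimage_hitIndices_inter_deviation_le {A : Set Ω} (hA : MeasurableSet A)
    {g : Ω → ℝ} (hg_meas : Measurable g) (hg : ∀ x, g x ∈ Set.Icc (0 : ℝ) 1) {δ : ℝ} (hδ : 0 ≤ δ)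
    (k : ℕ) (s : Finset ι) :
    Measure.pi (fun _ : ι => D) (hitIndices A ⁻¹' {s} ∩
        {ω | k ≤ (hitIndices A ω).card ∧ δ < |(∑ j ∈ hitIndices A ω, g (ω j)) /
          (hitIndices A ω).card - ∫ x, g x ∂D[|A]|})
      ≤ ENNReal.ofReal (2 * Real.exp (-2 * k * δ ^ 2)) *
        Measure.pi (fun _ : ι => D) (hitIndices A ⁻¹' {s}) := by
  by_cases hks : k ≤ s.card
  · calc _ ≤ Measure.pi (fun _ : ι => D) (hitIndices A ⁻¹' {s} ∩
            {ω | δ < |(∑ j ∈ s, g (ω j)) / s.card - ∫ x, g x ∂D[|A]|}) := by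
          refine measure_mono fun ω ⟨(hω : hitIndices A ω = s), _, hdev⟩ => ⟨hω, ?_⟩
          rwa [hω] at hdev
      _ ≤ _ := measure_preimage_hitIndices_inter_le D hA hg_meas hg hδ s
      _ ≤ ENNReal.ofReal (2 * Real.exp (-2 * k * δ ^ 2)) *
            Measure.pi (fun _ : ι => D) (hitIndices A ⁻¹' {s}) := by
          have hks' : (k : ℝ) * δ ^ 2 ≤ s.card * δ ^ 2 := by gcongr
          gcongr ENNReal.ofReal (2 * Real.exp ?_) * _
          linarith
  · refine (measure_mono_null ?_ measure_empty).trans_le zero_le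
    rintro ω ⟨(hω : hitIndices A ω = s), hkω, -⟩
    exact hks (hω ▸ hkω)

end Fibers

theorem conditional_sample_average_concentration_general
    (Ω : Type*) [Fintype Ω] [MeasurableSpace Ω] [MeasurableSingletonClass Ω]
    (D : Measure Ω) [IsProbabilityMeasure D]
    (A : Set Ω)
    (g : Ω → ℝ) (hg : ∀ ω, g ω ∈ Set.Icc (0 : ℝ) 1)
    (δ : ℝ) (hδ : 0 < δ) (k : ℕ) (N : ℕ) :
    (Measure.pi (fun _ : Fin N => D))
      {ω | k ≤ (Finset.univ.filter (fun j => ω j ∈ A)).card ∧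
        δ < |(∑ j ∈ Finset.univ.filter (fun j => ω j ∈ A), g (ω j)) /
              ((Finset.univ.filter (fun j => ω j ∈ A)).card : ℝ) -
            (∫ x, A.indicator g x ∂D) / (D A).toReal|}
      ≤ ENNReal.ofReal (2 * Real.exp (-2 * k * δ ^ 2)) := by
  set P := Measure.pi (fun _ : Fin N => D)
  rw [← integral_cond_eq_integral_indicator_div D MeasurableSet.of_discrete]
  set E := {ω : Fin N → Ω | _}
  calc P E = ∑ s, P (hitIndices A ⁻¹' {s} ∩ E) := by
        simp_rw [← Measure.restrict_apply' MeasurableSet.of_discrete]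
        rw [sum_measure_preimage_singleton _ fun s _ => MeasurableSet.of_discrete, coe_univ,
          Set.preimage_univ, Measure.restrict_apply_univ]
    _ ≤ ∑ s, ENNReal.ofReal (2 * Real.exp (-2 * k * δ ^ 2)) * P (hitIndices A ⁻¹' {s}) :=
        sum_le_sum fun s _ => measure_preimage_hitIndices_inter_deviation_le D
          MeasurableSet.of_discrete Measurable.of_discrete hg hδ.le k s
    _ = ENNReal.ofReal (2 * Real.exp (-2 * k * δ ^ 2)) := by
        rw [← mul_sum, sum_measure_preimage_singleton _ fun s _ => MeasurableSet.of_discrete,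
          coe_univ, Set.preimage_univ, measure_univ, mul_one]

/-- Concentration of the empirical conditional average: among `N` i.i.d. draws
from a finite probability space `(Ω, D)` and an event `A` of positive
probability, the probability that at least `k` samples fall in `A` and the
empirical average of a `[0,1]`-valued function `g` over those samples deviates
from the conditional expectation `E[g·1_A]/D(A)` by more than `δ` is at most
`2·exp(-2·k·δ²)`. -/
theorem conditional_sample_average_concentration
    (Ω : Type*) [Fintype Ω] [MeasurableSpace Ω] [MeasurableSingletonClass Ω]
    (D : Measure Ω) [IsProbabilityMeasure D]
    (A : Set Ω) (hA : 0 < (D A).toReal)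
    (g : Ω → ℝ) (hg : ∀ ω, g ω ∈ Set.Icc (0 : ℝ) 1)
    (δ : ℝ) (hδ : 0 < δ) (k : ℕ) (hk : 1 ≤ k) (N : ℕ) :
    (Measure.pi (fun _ : Fin N => D))
      {ω | k ≤ (Finset.univ.filter (fun j => ω j ∈ A)).card ∧
        δ < |(∑ j ∈ Finset.univ.filter (fun j => ω j ∈ A), g (ω j)) /
              ((Finset.univ.filter (fun j => ω j ∈ A)).card : ℝ) -
            (∫ x, A.indicator g x ∂D) / (D A).toReal|}
      ≤ ENNReal.ofReal (2 * Real.exp (-2 * k * δ ^ 2)) :=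
  conditional_sample_average_concentration_general Ω D A g hg δ hδ k N
end

section
/- (Properties of the sampled multi-unit mechanism.) Consider n buyers with finite type sets T_i, type marginals f_i (probability distributions on T_i) and joint product distribution μ on ∏_i T_i; m identical items; valuations v_i : {0,…,m} × T_i → [0,L] with v_i(0,t) = 0; and budgets B_i ∈ [0,L]. For each ℓ ∈ {1,…,K} let (q^ℓ, p^ℓ) assign to every type vector t⃗ quantities q_i^ℓ(t⃗) ∈ {0,…,m} with ∑_i q_i^ℓ(t⃗) ≤ m and payments p_i^ℓ(t⃗) ∈ [0, B_i] with p_i^ℓ(t⃗) ≤ v_i(q_i^ℓ(t⃗), t⃗_i). Define the mechanism that, on reported type vector t⃗, picks ℓ ∈ {1,…,K} uniformly at random and uses (q^ℓ(t⃗), p^ℓ(t⃗)); its interim quantities are X_{iq}(t) = (1/K)·∑_ℓ Pr_{t⃗∼μ}[q_i^ℓ(t⃗) = q | t⃗_i = t] and P_i(t) = (1/K)·∑_ℓ E_{t⃗∼μ}[p_i^ℓ(t⃗) | t⃗_i = t], and the interim utility of buyer i of true type t reporting t' is U_i(t',t) = ∑_q v_i(q,t)·X_{iq}(t') − P_i(t').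 Suppose there exist numbers X̂_{iq}(t), P̂_i(t) and δ ≥ 0, R ∈ ℝ such that |X_{iq}(t) − X̂_{iq}(t)| ≤ δ and |P_i(t) − P̂_i(t)| ≤ δ for all i, q, t; the hat variables satisfy exact Bayesian incentive compatibility, ∑_q v_i(q,t)·X̂_{iq}(t) − P̂_i(t) ≥ ∑_q v_i(q,t)·X̂_{iq}(t') − P̂_i(t') for all i and t, t' ∈ T_i; and ∑_i ∑_{t∈T_i} f_i(t)·P̂_i(t) ≥ R. Then: (a) in every realization the mechanism is ex-post individually rational and no buyer ever pays more than his budget; (b) the mechanism is ε'-BIC with ε' = 2·((m+1)·L + 1)·δ, i.e. U_i(t,t) ≥ U_i(t',t) − ε' for all i and t, t' ∈ T_i; and (c) its expected revenue satisfies ∑_i ∑_{t∈T_i} f_i(t)·P_i(t) ≥ R − n·δ. -/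
/-!
Part (a) is the per-round feasibility of the rules being sampled. For (b) and (c), the interim
utility `∑_q v(q,t) X(q,t') - P(t')` is affine in the interim quantities with coefficients in
`[0, L]`, so moving `m + 1` allocation probabilities and one payment by at most `δ` moves it by at
most `((m+1)L + 1)δ`; comparing truthful and untruthful reports through the exactly BIC hat
quantities costs this twice. The expected revenue `∑_t f(t) P(t)` is an average, so it moves by at
most `δ` per buyer.
-/

open Finset
open scoped Classical

section Perturbation

variable {ι : Type*} [Fintype ι]

theorem abs_sum_mul_sub_sum_mul_le_sum_mul {w x y : ι → ℝ} {δ : ℝ}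
    (hw : ∀ i, 0 ≤ w i) (hxy : ∀ i, |x i - y i| ≤ δ) :
    |∑ i, w i * x i - ∑ i, w i * y i| ≤ (∑ i, w i) * δ := by
  rw [← sum_sub_distrib, sum_mul]
  refine (abs_sum_le_sum_abs _ _).trans (sum_le_sum fun i _ => ?_)
  rw [← mul_sub, abs_mul, abs_of_nonneg (hw i)]
  exact mul_le_mul_of_nonneg_left (hxy i) (hw i)

theorem abs_sub_quasilinear_le {w x y : ι → ℝ} {π π' L δ : ℝ}
    (hw0 : ∀ i, 0 ≤ w i) (hwL : ∀ i, w i ≤ L)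
    (hxy : ∀ i, |x i - y i| ≤ δ) (hπ : |π - π'| ≤ δ) :
    |(∑ i, w i * x i - π) - (∑ i, w i * y i - π')| ≤ (Fintype.card ι * L + 1) * δ := by
  have hδ : 0 ≤ δ := (abs_nonneg _).trans hπ
  have hsum : (∑ i, w i) * δ ≤ Fintype.card ι * L * δ := by
    gcongr
    simpa using sum_le_sum fun i (_ : i ∈ univ) => hwL i
  calc |(∑ i, w i * x i - π) - (∑ i, w i * y i - π')|
      = |(∑ i, w i * x i - ∑ i, w i * y i) - (π - π')| := by ring_nf
    _ ≤ |∑ i, w i * x i - ∑ i, w i * y i| + |π - π'| := abs_sub _ _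
    _ ≤ Fintype.card ι * L * δ + δ :=
      add_le_add ((abs_sum_mul_sub_sum_mul_le_sum_mul hw0 hxy).trans hsum) hπ
    _ = (Fintype.card ι * L + 1) * δ := by ring

end Perturbation

theorem sub_two_mul_le_of_abs_sub_le {a b a' b' η : ℝ} (hab : a ≤ b)
    (ha : |a' - a| ≤ η) (hb : |b' - b| ≤ η) : a' - 2 * η ≤ b' := by
  linarith [(abs_le.1 ha).2, (abs_le.1 hb).1]

theorem sampled_multiunit_mechanism_properties_general
    (n m K : ℕ) (L : ℝ)
    (T : Fin n → Type*) [∀ i, Fintype (T i)]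
    (f : ∀ i, T i → ℝ)
    (hf_pos : ∀ i t, 0 < f i t) (hf_sum : ∀ i, ∑ t, f i t = 1)
    (v : ∀ i : Fin n, Fin (m + 1) → T i → ℝ)
    (hv_nonneg : ∀ i q t, 0 ≤ v i q t) (hv_le : ∀ i q t, v i q t ≤ L)
    (B : Fin n → ℝ)
    (q : Fin K → (∀ i, T i) → Fin n → Fin (m + 1))
    (p : Fin K → (∀ i, T i) → Fin n → ℝ)
    (hp_budget : ∀ ℓ tv i, p ℓ tv i ≤ B i)
    (hp_ir : ∀ ℓ tv i, p ℓ tv i ≤ v i (q ℓ tv i) (tv i))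
    (X : ∀ i : Fin n, Fin (m + 1) → T i → ℝ)
    (P : ∀ i : Fin n, T i → ℝ)
    (U : ∀ i : Fin n, T i → T i → ℝ)
    (hU : ∀ i t' t, U i t' t = (∑ qq, v i qq t * X i qq t') - P i t')
    (Xh : ∀ i : Fin n, Fin (m + 1) → T i → ℝ) (Ph : ∀ i : Fin n, T i → ℝ)
    (δ : ℝ) (R : ℝ)
    (hXh : ∀ i qq t, |X i qq t - Xh i qq t| ≤ δ)
    (hPh : ∀ i t, |P i t - Ph i t| ≤ δ)
    (hBIC : ∀ i (t t' : T i),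
      (∑ qq, v i qq t * Xh i qq t') - Ph i t' ≤ (∑ qq, v i qq t * Xh i qq t) - Ph i t)
    (hRev : R ≤ ∑ i, ∑ t, f i t * Ph i t) :
    (∀ ℓ tv i, p ℓ tv i ≤ v i (q ℓ tv i) (tv i) ∧ p ℓ tv i ≤ B i) ∧
    (∀ i (t t' : T i), U i t' t - 2 * (((m : ℝ) + 1) * L + 1) * δ ≤ U i t t) ∧
    (R - n * δ ≤ ∑ i, ∑ t, f i t * P i t) := by
  refine ⟨fun ℓ tv i => ⟨hp_ir ℓ tv i, hp_budget ℓ tv i⟩, fun i t t' => ?_, ?_⟩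
  · have hU_close : ∀ s, |U i s t - (∑ qq, v i qq t * Xh i qq s - Ph i s)| ≤
        (((m : ℝ) + 1) * L + 1) * δ := fun s => by
      simpa [hU] using abs_sub_quasilinear_le (hv_nonneg i · t) (hv_le i · t) (hXh i · s) (hPh i s)
    rw [mul_assoc]
    exact sub_two_mul_le_of_abs_sub_le (hBIC i t t') (hU_close t') (hU_close t)
  · have hrev_close : ∀ i, ∑ t, f i t * Ph i t - δ ≤ ∑ t, f i t * P i t := fun i => by
      have h := abs_sum_mul_sub_sum_mul_le_sum_mul (fun t => (hf_pos i t).le) (hPh i)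
      rw [hf_sum i, one_mul] at h
      linarith [(abs_le.1 h).1]
    calc R - n * δ ≤ ∑ i, (∑ t, f i t * Ph i t - δ) := by simpa [sum_sub_distrib] using hRev
      _ ≤ ∑ i, ∑ t, f i t * P i t := sum_le_sum fun i _ => hrev_close i

/-- Properties of the sampled multi-unit mechanism: choosing uniformly among
`K` per-round ex-post feasible allocation/payment rules yields a mechanism
that is (a) ex-post individually rational and budget respecting, (b)
`2((m+1)L+1)δ`-BIC whenever its interim quantities are `δ`-close to exactly
BIC "hat" quantities, and (c) extracts expected revenue at least `R - nδ`
whenever the hat quantities extract revenue at least `R`. -/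
theorem sampled_multiunit_mechanism_properties
    (n m K : ℕ) (hK : 0 < K) (L : ℝ)
    (T : Fin n → Type*) [∀ i, Fintype (T i)]
    (f : ∀ i, T i → ℝ)
    (hf_pos : ∀ i t, 0 < f i t) (hf_sum : ∀ i, ∑ t, f i t = 1)
    (μ : (∀ i, T i) → ℝ) (hμ : ∀ tv, μ tv = ∏ i, f i (tv i))
    (v : ∀ i : Fin n, Fin (m + 1) → T i → ℝ)
    (hv_nonneg : ∀ i q t, 0 ≤ v i q t) (hv_le : ∀ i q t, v i q t ≤ L)
    (hv_zero : ∀ i t, v i 0 t = 0)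
    (B : Fin n → ℝ) (hB : ∀ i, B i ∈ Set.Icc (0 : ℝ) L)
    (q : Fin K → (∀ i, T i) → Fin n → Fin (m + 1))
    (p : Fin K → (∀ i, T i) → Fin n → ℝ)
    (hsupply : ∀ ℓ tv, ∑ i, ((q ℓ tv i : ℕ)) ≤ m)
    (hp_nonneg : ∀ ℓ tv i, 0 ≤ p ℓ tv i)
    (hp_budget : ∀ ℓ tv i, p ℓ tv i ≤ B i)
    (hp_ir : ∀ ℓ tv i, p ℓ tv i ≤ v i (q ℓ tv i) (tv i))
    (X : ∀ i : Fin n, Fin (m + 1) → T i → ℝ)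
    (hX : ∀ i qq t, X i qq t =
      (1 / (K : ℝ)) * ∑ ℓ, (∑ tv, if tv i = t ∧ q ℓ tv i = qq then μ tv else 0) / f i t)
    (P : ∀ i : Fin n, T i → ℝ)
    (hP : ∀ i t, P i t =
      (1 / (K : ℝ)) * ∑ ℓ, (∑ tv, if tv i = t then μ tv * p ℓ tv i else 0) / f i t)
    (U : ∀ i : Fin n, T i → T i → ℝ)
    (hU : ∀ i t' t, U i t' t = (∑ qq, v i qq t * X i qq t') - P i t')
    (Xh : ∀ i : Fin n, Fin (m + 1) → T i → ℝ) (Ph : ∀ i : Fin n, T i → ℝ)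
    (δ : ℝ) (hδ : 0 ≤ δ) (R : ℝ)
    (hXh : ∀ i qq t, |X i qq t - Xh i qq t| ≤ δ)
    (hPh : ∀ i t, |P i t - Ph i t| ≤ δ)
    (hBIC : ∀ i (t t' : T i),
      (∑ qq, v i qq t * Xh i qq t') - Ph i t' ≤ (∑ qq, v i qq t * Xh i qq t) - Ph i t)
    (hRev : R ≤ ∑ i, ∑ t, f i t * Ph i t) :
    (∀ ℓ tv i, p ℓ tv i ≤ v i (q ℓ tv i) (tv i) ∧ p ℓ tv i ≤ B i) ∧
    (∀ i (t t' : T i), U i t' t - 2 * (((m : ℝ) + 1) * L + 1) * δ ≤ U i t t) ∧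
    (R - n * δ ≤ ∑ i, ∑ t, f i t * P i t) :=
  sampled_multiunit_mechanism_properties_general n m K L T f hf_pos hf_sum v hv_nonneg hv_le B q p
    hp_budget hp_ir X P U hU Xh Ph δ R hXh hPh hBIC hRev
end

section
/- (Correctness of the dynamic program for a seller with a non-linear utility of revenue.) Let n, m ∈ ℕ, β ∈ ℝ, U : ℤ → ℝ, and for each i ∈ {1,…,n} a nonempty finite set F_i ⊆ ℤ × {0,…,m} of feasible (payment, quantity) pairs, each containing at least one pair with quantity 0, together with weights α_i : F_i → ℝ. Define A(i,k,z) for i ∈ {1,…,n+1}, k ∈ {0,…,m}, z ∈ ℤ by A(n+1,k,z) = 0 and A(i,k,z) = max over (p,q) ∈ F_i with q ≤ m−k of [ β·(U(z+p) − U(z)) + α_i(p,q) + A(i+1, k+q, z+p) ]. Then A(1,0,0) equals the maximum, over all choices ((p_1,q_1),…,(p_n,q_n)) with (p_i,q_i) ∈ F_i for each i and ∑_{i=1}^n q_i ≤ m, of ∑_{i=1}^n α_i(p_i,q_i) + β·( U(∑_{i=1}^n p_i) − U(0) ). -/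
/-!
Read `A i k z` as the value of the tail problem for buyers `i, …, n` with `m - k` items left and
revenue `z` already collected. The seller's term telescopes,
`U (z + p + r) - U z = (U (z + p) - U z) + (U (z + p + r) - U (z + p))`, so fixing buyer `i`'s
pair `(p, q)` turns the tail problem into a shifted copy of the tail problem from `i + 1` with
`q` fewer items and revenue `z + p`. Hence the set of tail values is a finite union of translates
of the next ones, and its maximum is the `sup'` of their maxima, which is the recursion.
-/

open Finset

section

variable {M : Type*} [AddCommMonoid M]

theorem Finset.sum_Icc_eq_add_sum_Icc_add_one {i n : ℕ} (h : i ≤ n) (f : ℕ → M) :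
    ∑ j ∈ Icc i n, f j = f i + ∑ j ∈ Icc (i + 1) n, f j := by
  rw [← insert_Icc_add_one_left_eq_Icc h, sum_insert (by simp)]

theorem Finset.sum_apply_update_of_notMem {ι γ : Type*} [DecidableEq ι] {s : Finset ι} {i : ι}
    (hi : i ∉ s) (f : ι → γ → M) (ch : ι → γ) (x : γ) :
    ∑ j ∈ s, f j (Function.update ch i x j) = ∑ j ∈ s, f j (ch j) :=
  sum_congr rfl fun j hj => by rw [Function.update_of_ne (ne_of_mem_of_not_mem hj hi)]

end

theorem Finset.isGreatest_biUnion_sup' {ι α : Type*} [LinearOrder α] {S : Finset ι}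
    (hS : S.Nonempty) {T : ι → Set α} {g : ι → α} (h : ∀ x ∈ S, IsGreatest (T x) (g x)) :
    IsGreatest (⋃ x ∈ S, T x) (S.sup' hS g) := by
  obtain ⟨x, hx, hgx⟩ := S.exists_mem_eq_sup' hS g
  refine ⟨Set.mem_biUnion hx (hgx ▸ (h x hx).1), ?_⟩
  simp only [mem_upperBounds, Set.mem_iUnion]
  rintro a ⟨y, hy, ha⟩
  exact ((h y hy).2 ha).trans (le_sup' g hy)

section TailValues

variable (F : ℕ → Finset (ℤ × ℕ)) (α : ℕ → ℤ × ℕ → ℝ) (β : ℝ) (U : ℤ → ℝ)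

def tailValues (i n b : ℕ) (z : ℤ) : Set ℝ :=
  {s | ∃ ch : ℕ → ℤ × ℕ, (∀ j ∈ Icc i n, ch j ∈ F j) ∧ ∑ j ∈ Icc i n, (ch j).2 ≤ b ∧
    s = ∑ j ∈ Icc i n, α j (ch j) + β * (U (z + ∑ j ∈ Icc i n, (ch j).1) - U z)}

theorem tailValues_of_lt {i n : ℕ} (h : n < i) (b : ℕ) (z : ℤ) :
    tailValues F α β U i n b z = {0} := by
  have hempty : Icc i n = ∅ := Icc_eq_empty_of_lt h
  ext s
  simp [tailValues, hempty]

theorem tailValues_eq_biUnion {i n : ℕ} (h : i ≤ n) (b : ℕ) (z : ℤ) :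
    tailValues F α β U i n b z = ⋃ pq ∈ (F i).filter (·.2 ≤ b),
      (β * (U (z + pq.1) - U z) + α i pq + ·) ''
        tailValues F α β U (i + 1) n (b - pq.2) (z + pq.1) := by
  have hsucc : ∀ j ∈ Icc (i + 1) n, j ∈ Icc i n := fun j hj => Icc_subset_Icc_left i.le_succ hj
  have hi : i ∉ Icc (i + 1) n := by simp
  ext s
  simp only [tailValues, Set.mem_iUnion, Set.mem_image, Set.mem_ofPred_eq, mem_filter,
    sum_Icc_eq_add_sum_Icc_add_one h]
  constructor
  · rintro ⟨ch, hchF, hchq, rfl⟩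
    refine ⟨ch i, ⟨hchF i (by simpa using h), by omega⟩, _,
      ⟨ch, fun j hj => hchF j (hsucc j hj), by omega, rfl⟩, ?_⟩
    rw [← add_assoc z]
    ring
  · rintro ⟨pq, ⟨hpq, hpqb⟩, _, ⟨ch, hchF, hchq, rfl⟩, rfl⟩
    refine ⟨Function.update ch i pq, fun j hj => ?_, ?_, ?_⟩
    · rcases eq_or_ne j i with rfl | hji
      · simpa using hpq
      · rw [Function.update_of_ne hji]
        exact hchF j (by simp only [mem_Icc] at hj ⊢; omega)
    · simp only [Function.update_self, sum_apply_update_of_notMem hi (fun _ (x : ℤ × ℕ) => x.2)]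
      omega
    · simp only [Function.update_self, sum_apply_update_of_notMem hi (fun _ (x : ℤ × ℕ) => x.1),
        sum_apply_update_of_notMem hi α]
      rw [← add_assoc z]
      ring

end TailValues

theorem nonlinear_seller_dp_correct_general
    (n m : ℕ) (β : ℝ) (U : ℤ → ℝ)
    (F : ℕ → Finset (ℤ × ℕ))
    (hF0 : ∀ i ∈ Finset.Icc 1 n, ∃ p : ℤ, (p, 0) ∈ F i)
    (α : ℕ → ℤ × ℕ → ℝ)
    (A : ℕ → ℕ → ℤ → ℝ)
    (hbase : ∀ k z, A (n + 1) k z = 0)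
    (hrec : ∀ i, 1 ≤ i → i ≤ n → ∀ k, k ≤ m → ∀ z : ℤ,
      ∀ hne : ((F i).filter (fun pq => pq.2 ≤ m - k)).Nonempty,
      A i k z = ((F i).filter (fun pq => pq.2 ≤ m - k)).sup' hne
        (fun pq => β * (U (z + pq.1) - U z) + α i pq + A (i + 1) (k + pq.2) (z + pq.1))) :
    IsGreatest {s : ℝ | ∃ ch : ℕ → ℤ × ℕ,
      (∀ i ∈ Finset.Icc 1 n, ch i ∈ F i) ∧
      (∑ i ∈ Finset.Icc 1 n, (ch i).2) ≤ m ∧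
      s = (∑ i ∈ Finset.Icc 1 n, α i (ch i)) +
        β * (U (∑ i ∈ Finset.Icc 1 n, (ch i).1) - U 0)}
      (A 1 0 0) := by
  have key : ∀ i ≤ n + 1, 1 ≤ i → ∀ k ≤ m, ∀ z,
      IsGreatest (tailValues F α β U i n (m - k) z) (A i k z) := by
    intro i hi
    induction hi using Nat.decreasingInduction with
    | self =>
      intro _ k _ z
      rw [hbase, tailValues_of_lt F α β U n.lt_succ_self]
      exact isGreatest_singleton
    | of_succ i hi ih =>
      intro h1 k hk z
      obtain ⟨p, hp⟩ := hF0 i (mem_Icc.2 ⟨h1, by omega⟩)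
      have hne : ((F i).filter (fun pq => pq.2 ≤ m - k)).Nonempty :=
        ⟨(p, 0), mem_filter.2 ⟨hp, Nat.zero_le _⟩⟩
      rw [hrec i h1 (by omega) k hk z hne, tailValues_eq_biUnion F α β U (by omega)]
      refine isGreatest_biUnion_sup' hne fun pq hpq => ?_
      have hq := (mem_filter.1 hpq).2
      have htail := ih (by omega) (k + pq.2) (by omega) (z + pq.1)
      rw [Nat.sub_add_eq] at htail
      exact (monotone_id.const_add _).map_isGreatest htail
  simpa [tailValues] using key 1 (by omega) le_rfl 0 (Nat.zero_le m) 0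

/-- Correctness of the dynamic program for a seller with a non-linear utility
of revenue: tracking the number of allocated items and the cumulative revenue,
the recursion `A i k z = max_{(p,q) ∈ F i, q ≤ m-k}
(β(U(z+p) - U z) + α i (p,q) + A (i+1) (k+q) (z+p))` with `A (n+1) k z = 0`
computes in `A 1 0 0` the maximum of
`∑ α i (p_i,q_i) + β(U(∑ p_i) - U 0)` over feasible choices with `∑ q_i ≤ m`. -/
theorem nonlinear_seller_dp_correct
    (n m : ℕ) (β : ℝ) (U : ℤ → ℝ)
    (F : ℕ → Finset (ℤ × ℕ))
    (hFq : ∀ i ∈ Finset.Icc 1 n, ∀ pq ∈ F i, pq.2 ≤ m)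
    (hF0 : ∀ i ∈ Finset.Icc 1 n, ∃ p : ℤ, (p, 0) ∈ F i)
    (α : ℕ → ℤ × ℕ → ℝ)
    (A : ℕ → ℕ → ℤ → ℝ)
    (hbase : ∀ k z, A (n + 1) k z = 0)
    (hrec : ∀ i, 1 ≤ i → i ≤ n → ∀ k, k ≤ m → ∀ z : ℤ,
      ∀ hne : ((F i).filter (fun pq => pq.2 ≤ m - k)).Nonempty,
      A i k z = ((F i).filter (fun pq => pq.2 ≤ m - k)).sup' hne
        (fun pq => β * (U (z + pq.1) - U z) + α i pq + A (i + 1) (k + pq.2) (z + pq.1))) :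
    IsGreatest {s : ℝ | ∃ ch : ℕ → ℤ × ℕ,
      (∀ i ∈ Finset.Icc 1 n, ch i ∈ F i) ∧
      (∑ i ∈ Finset.Icc 1 n, (ch i).2) ≤ m ∧
      s = (∑ i ∈ Finset.Icc 1 n, α i (ch i)) +
        β * (U (∑ i ∈ Finset.Icc 1 n, (ch i).1) - U 0)}
      (A 1 0 0) :=
  nonlinear_seller_dp_correct_general n m β U F hF0 α A hbase hrec
end

section
/- (A c-approximate welfare oracle certifies the c-relaxed program.) Let T_1,…,T_n be finite type sets with probability distributions f_i, let μ = ∏_i f_i be the product distribution on T = ∏_i T_i, and let m ∈ ℕ. For each type vector t⃗ ∈ T let F(t⃗) ⊆ [0,1]^{n×m} be a set of feasible allocations, and let α_{i,j,t} ≥ 0 for i ∈ {1,…,n}, j ∈ {1,…,m}, t ∈ T_i. Suppose there exist x* with x*(t⃗) ∈ F(t⃗) for every t⃗ and numbers X*_{i,j,t} satisfying f_i(t)·X*_{i,j,t} ≤ ∑_{t⃗ : t⃗_i = t} μ(t⃗)·x*_{i,j}(t⃗) for all i, j, t. Suppose c ≥ 1 and for each t⃗, x̃(t⃗) ∈ F(t⃗)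 is a c-approximate welfare maximizer: c·∑_{i,j} α_{i,j,t⃗_i}·x̃_{i,j}(t⃗) ≥ ∑_{i,j} α_{i,j,t⃗_i}·x_{i,j} for every x ∈ F(t⃗). Then ∑_{i,j,t} α_{i,j,t}·f_i(t)·X*_{i,j,t} ≤ c·∑_{t⃗∈T} μ(t⃗)·∑_{i,j} α_{i,j,t⃗_i}·x̃_{i,j}(t⃗). -/
open Finset
open scoped Classical

/-
Pointwise, the oracle's welfare is at least a `1/c` fraction of the welfare of the feasible
allocation `xs`; averaging over `μ` loses nothing. On the other side, weighting the interim
constraints by `α ≥ 0` and summing over types regroups the right-hand sides by type vector, so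
the interim objective is bounded by the expected welfare of `xs`.
-/

noncomputable def weightedWelfare {n m : ℕ} {T : Fin n → Type*} (α : ∀ i : Fin n, Fin m → T i → ℝ)
    (tv : ∀ i, T i) (x : Fin n → Fin m → ℝ) : ℝ :=
  ∑ i, ∑ j, α i j (tv i) * x i j

theorem sum_mul_sum_ite_eq {β γ : Type*} [Fintype β] [Fintype γ] [DecidableEq γ]
    (p : β → γ) (a : γ → ℝ) (g : β → ℝ) :
    ∑ c, a c * ∑ b, (if p b = c then g b else 0) = ∑ b, a (p b) * g b := by
  simp only [mul_sum, mul_ite, mul_zero]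
  rw [sum_comm]
  simp

theorem sum_mul_le_sum_of_mul_le_sum_ite {β γ : Type*} [Fintype β] [Fintype γ] [DecidableEq γ]
    (p : β → γ) {a f X : γ → ℝ} {g : β → ℝ} (ha : ∀ c, 0 ≤ a c)
    (hX : ∀ c, f c * X c ≤ ∑ b, if p b = c then g b else 0) :
    ∑ c, a c * (f c * X c) ≤ ∑ b, a (p b) * g b := by
  rw [← sum_mul_sum_ite_eq p a g]
  exact sum_le_sum fun c _ => mul_le_mul_of_nonneg_left (hX c) (ha c)

theorem interim_value_le_expected_welfare {n m : ℕ} {T : Fin n → Type*} [∀ i, Fintype (T i)]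
    {f : ∀ i, T i → ℝ} {μ : (∀ i, T i) → ℝ} {α : ∀ i : Fin n, Fin m → T i → ℝ}
    (hα : ∀ i j t, 0 ≤ α i j t) {xs : (∀ i, T i) → Fin n → Fin m → ℝ}
    {Xs : ∀ i : Fin n, Fin m → T i → ℝ}
    (hXs : ∀ i j t, f i t * Xs i j t ≤ ∑ tv, if tv i = t then μ tv * xs tv i j else 0) :
    ∑ i, ∑ j, ∑ t, α i j t * (f i t * Xs i j t) ≤ ∑ tv, μ tv * weightedWelfare α tv (xs tv) := by
  calc ∑ i, ∑ j, ∑ t, α i j t * (f i t * Xs i j t)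
      ≤ ∑ i, ∑ j, ∑ tv, α i j (tv i) * (μ tv * xs tv i j) :=
        sum_le_sum fun i _ => sum_le_sum fun j _ =>
          sum_mul_le_sum_of_mul_le_sum_ite (fun tv : ∀ i, T i => tv i) (hα i j) (hXs i j)
    _ = ∑ tv, μ tv * weightedWelfare α tv (xs tv) := by
        simp only [weightedWelfare, mul_sum]
        conv_rhs => rw [sum_comm]
        refine sum_congr rfl fun i _ => ?_
        conv_rhs => rw [sum_comm]
        exact sum_congr rfl fun j _ => sum_congr rfl fun tv _ => by ring

theorem sum_mul_le_mul_sum_mul {β : Type*} [Fintype β] {μ u v : β → ℝ} {c : ℝ}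
    (hμ : ∀ b, 0 ≤ μ b) (huv : ∀ b, u b ≤ c * v b) :
    ∑ b, μ b * u b ≤ c * ∑ b, μ b * v b := by
  rw [mul_sum]
  refine sum_le_sum fun b _ => ?_
  calc μ b * u b ≤ μ b * (c * v b) := mul_le_mul_of_nonneg_left (huv b) (hμ b)
    _ = c * (μ b * v b) := mul_left_comm _ _ _

theorem c_approx_oracle_certifies_relaxed_program_general
    (n m : ℕ) (T : Fin n → Type*) [∀ i, Fintype (T i)]
    (f : ∀ i, T i → ℝ) (hf : ∀ i t, 0 ≤ f i t)
    (μ : (∀ i, T i) → ℝ) (hμ : ∀ tv, μ tv = ∏ i, f i (tv i))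
    (F : (∀ i, T i) → Set (Fin n → Fin m → ℝ))
    (α : ∀ i : Fin n, Fin m → T i → ℝ) (hα : ∀ i j t, 0 ≤ α i j t)
    (xs : (∀ i, T i) → Fin n → Fin m → ℝ) (hxs : ∀ tv, xs tv ∈ F tv)
    (Xs : ∀ i : Fin n, Fin m → T i → ℝ)
    (hXs : ∀ i j t, f i t * Xs i j t ≤ ∑ tv, if tv i = t then μ tv * xs tv i j else 0)
    (c : ℝ)
    (xt : (∀ i, T i) → Fin n → Fin m → ℝ)
    (happrox : ∀ tv, ∀ x ∈ F tv,
      (∑ i, ∑ j, α i j (tv i) * x i j) ≤ c * ∑ i, ∑ j, α i j (tv i) * xt tv i j) :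
    (∑ i, ∑ j, ∑ t, α i j t * (f i t * Xs i j t)) ≤
      c * ∑ tv, μ tv * ∑ i, ∑ j, α i j (tv i) * xt tv i j := by
  have hμ_nonneg : ∀ tv, 0 ≤ μ tv := fun tv =>
    (hμ tv).symm ▸ prod_nonneg fun i _ => hf i (tv i)
  exact (interim_value_le_expected_welfare hα hXs).trans
    (sum_mul_le_mul_sum_mul hμ_nonneg fun tv => happrox tv (xs tv) (hxs tv))

/-- A `c`-approximate welfare oracle certifies the `c`-relaxed program: if
interim allocations `Xs` are dominated by the true expected allocations of
some feasible `xs`, and `xt` is a per-type-vector `c`-approximate welfare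
maximizer for nonnegative weights `α`, then the weighted interim value is at
most `c` times the expected weighted welfare of `xt`. -/
theorem c_approx_oracle_certifies_relaxed_program
    (n m : ℕ) (T : Fin n → Type*) [∀ i, Fintype (T i)]
    (f : ∀ i, T i → ℝ) (hf : ∀ i t, 0 ≤ f i t) (hf1 : ∀ i, ∑ t, f i t = 1)
    (μ : (∀ i, T i) → ℝ) (hμ : ∀ tv, μ tv = ∏ i, f i (tv i))
    (F : (∀ i, T i) → Set (Fin n → Fin m → ℝ))
    (hF01 : ∀ tv, ∀ x ∈ F tv, ∀ i j, x i j ∈ Set.Icc (0 : ℝ) 1)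
    (α : ∀ i : Fin n, Fin m → T i → ℝ) (hα : ∀ i j t, 0 ≤ α i j t)
    (xs : (∀ i, T i) → Fin n → Fin m → ℝ) (hxs : ∀ tv, xs tv ∈ F tv)
    (Xs : ∀ i : Fin n, Fin m → T i → ℝ)
    (hXs : ∀ i j t, f i t * Xs i j t ≤ ∑ tv, if tv i = t then μ tv * xs tv i j else 0)
    (c : ℝ) (hc : 1 ≤ c)
    (xt : (∀ i, T i) → Fin n → Fin m → ℝ) (hxt : ∀ tv, xt tv ∈ F tv)
    (happrox : ∀ tv, ∀ x ∈ F tv,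
      (∑ i, ∑ j, α i j (tv i) * x i j) ≤ c * ∑ i, ∑ j, α i j (tv i) * xt tv i j) :
    (∑ i, ∑ j, ∑ t, α i j t * (f i t * Xs i j t)) ≤
      c * ∑ tv, μ tv * ∑ i, ∑ j, α i j (tv i) * xt tv i j :=
  c_approx_oracle_certifies_relaxed_program_general n m T f hf μ hμ F α hα xs hxs Xs hXs c xt
    happrox
end
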